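/- arXiv:2410.03669 — 2 statements merged into one kernel-verified Lean document; each statement's English description precedes it below -/
import Mathlib

section
/- Let T = (T₁,…,T_d) be a d-tuple of commuting bounded operators. Then q·σ_ap(T) ⊆ closure(JtW_q(T)), where σ_ap(T) is the joint approximate point spectrum. -/
open scoped InnerProductSpace

variable {H : Type*} [NormedAddCommGroup H] [InnerProductSpace ℂ H]

/-- The joint `q`-numerical range of a `d`-tuple of bounded operators:
`{(⟨T₁x,y⟩,…,⟨T_dx,y⟩) : ‖x‖ = ‖y‖ = 1, ⟨x,y⟩ = q}` (with `⟨x,y⟩` linear in `x`). -/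
def JtW {d : ℕ} (q : ℂ) (T : Fin d → H →L[ℂ] H) : Set (Fin d → ℂ) :=
  {z | ∃ x y : H, ‖x‖ = 1 ∧ ‖y‖ = 1 ∧ ⟪y, x⟫_ℂ = q ∧ z = fun i => ⟪y, (T i) x⟫_ℂ}

/-! If `x` is a unit vector with `‖Tᵢx - ξᵢx‖` small for all `i`, then every unit `y` with
`⟪y, x⟫ = q` gives `⟪y, Tᵢx⟫` close to `⟪y, ξᵢx⟫ = qξᵢ`; such a `y` exists as soon as `dim H ≥ 2`. -/

section RCLike

variable {𝕜 E : Type*} [RCLike 𝕜] [NormedAddCommGroup E] [InnerProductSpace 𝕜 E]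

theorem exists_norm_eq_one_inner_eq_zero (hdim : 2 ≤ Module.rank 𝕜 E) (x : E) :
    ∃ u : E, ‖u‖ = 1 ∧ ⟪x, u⟫_𝕜 = 0 := by
  have hspan : (𝕜 ∙ x) ≠ ⊤ := by
    intro h
    have hrank : Module.rank 𝕜 (𝕜 ∙ x) ≤ 1 :=
      (rank_span_le ({x} : Set E)).trans_eq (Cardinal.mk_singleton x)
    rw [h, rank_top] at hrank
    exact absurd (hdim.trans hrank) (by norm_num)
  obtain ⟨v, hv, hv0⟩ :=
    (Submodule.ne_bot_iff _).mp (mt Submodule.orthogonal_eq_bot_iff.mp hspan)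
  refine ⟨(‖v‖⁻¹ : 𝕜) • v, norm_smul_inv_norm hv0, ?_⟩
  rw [inner_smul_right, Submodule.mem_orthogonal_singleton_iff_inner_right.mp hv, mul_zero]

/-- Any admissible value `q` of `⟪y, x⟫` is attained, by `y = conj q • x + √(1 - ‖q‖²) • u`
with `u` a unit vector orthogonal to `x`. -/
theorem exists_norm_eq_one_inner_eq (hdim : 2 ≤ Module.rank 𝕜 E) {x : E} (hx : ‖x‖ = 1)
    {q : 𝕜} (hq : ‖q‖ ≤ 1) : ∃ y : E, ‖y‖ = 1 ∧ ⟪y, x⟫_𝕜 = q := by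
  obtain ⟨u, hu, hxu⟩ := exists_norm_eq_one_inner_eq_zero hdim x
  set s := √(1 - ‖q‖ ^ 2)
  have hs : s ^ 2 = 1 - ‖q‖ ^ 2 := Real.sq_sqrt (by nlinarith [norm_nonneg q])
  have hux : ⟪u, x⟫_𝕜 = 0 := inner_eq_zero_symm.mp hxu
  refine ⟨(starRingEnd 𝕜 q) • x + (s : 𝕜) • u, ?_, ?_⟩
  · have horth : ⟪(starRingEnd 𝕜 q) • x, (s : 𝕜) • u⟫_𝕜 = 0 := by
      rw [inner_smul_right, inner_smul_left, hxu, mul_zero, mul_zero]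
    have hsq := norm_add_sq_eq_norm_sq_add_norm_sq_of_inner_eq_zero _ _ horth
    rw [norm_smul, norm_smul, RCLike.norm_conj, RCLike.norm_ofReal, abs_of_nonneg (Real.sqrt_nonneg _), hx, hu] at hsq
    rw [← pow_eq_one_iff_of_nonneg (norm_nonneg _) two_ne_zero]
    linear_combination hsq + hs
  · rw [inner_add_left, inner_smul_left, inner_smul_left, inner_self_eq_norm_sq_to_K, hx, hux]
    simp

theorem norm_mul_sub_inner_le {y x v : E} {q : 𝕜} (hy : ‖y‖ = 1) (hyx : ⟪y, x⟫_𝕜 = q) (c : 𝕜) :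
    ‖q * c - ⟪y, v⟫_𝕜‖ ≤ ‖v - c • x‖ := by
  calc ‖q * c - ⟪y, v⟫_𝕜‖ = ‖⟪y, c • x - v⟫_𝕜‖ := by
        rw [inner_sub_right, inner_smul_right, hyx, mul_comm]
    _ ≤ ‖y‖ * ‖c • x - v‖ := norm_inner_le_norm _ _
    _ = ‖v - c • x‖ := by rw [hy, one_mul, norm_sub_rev]

end RCLike

theorem stmt_11_general {d : ℕ} (hdim : 2 ≤ Module.rank ℂ H) (q : ℂ) (hq : ‖q‖ ≤ 1)
    (T : Fin d → H →L[ℂ] H) :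
    (fun ξ : Fin d → ℂ => fun i => q * ξ i) ''
        {ξ : Fin d → ℂ | ∀ ε > (0 : ℝ), ∃ x : H, ‖x‖ = 1 ∧ ∑ i, ‖T i x - ξ i • x‖ < ε}
      ⊆ closure (JtW q T) := by
  rintro _ ⟨ξ, hξ, rfl⟩
  refine Metric.mem_closure_iff.mpr fun ε hε => ?_
  obtain ⟨x, hx, hsum⟩ := hξ ε hε
  obtain ⟨y, hy, hyx⟩ := exists_norm_eq_one_inner_eq hdim hx hq
  refine ⟨_, ⟨x, y, hx, hy, hyx, rfl⟩, (dist_pi_lt_iff hε).mpr fun i => ?_⟩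
  calc dist (q * ξ i) ⟪y, T i x⟫_ℂ ≤ ‖T i x - ξ i • x‖ :=
        (dist_eq_norm _ _).trans_le (norm_mul_sub_inner_le hy hyx _)
    _ ≤ ∑ j, ‖T j x - ξ j • x‖ :=
        Finset.single_le_sum (f := fun j => ‖T j x - ξ j • x‖) (fun j _ => norm_nonneg _)
          (Finset.mem_univ i)
    _ < ε := hsum

theorem stmt_11 {d : ℕ} (hdim : 2 ≤ Module.rank ℂ H) (q : ℂ) (hq : ‖q‖ ≤ 1)
    (T : Fin d → H →L[ℂ] H) (hcomm : ∀ i j, Commute (T i) (T j)) :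
    (fun ξ : Fin d → ℂ => fun i => q * ξ i) ''
        {ξ : Fin d → ℂ | ∀ ε > (0 : ℝ), ∃ x : H, ‖x‖ = 1 ∧ ∑ i, ‖T i x - ξ i • x‖ < ε}
      ⊆ closure (JtW q T) :=
  stmt_11_general hdim q hq T
end

section
/- For T = (T₁,…,T_d) ∈ B(H)^d and q ∈ (0,1), the joint q-numerical radius satisfies (q/(2√d(2−q²)))·‖T‖ ≤ Jtω_q(T) ≤ ‖T‖, where ‖T‖ = sup_{‖x‖=1} (∑_{i=1}^d ‖T_ix‖²)^{1/2}. -/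
/-! For a unit vector `x` and a unit vector `e ⊥ x`, both `y = q x ± √(1 - q²) e` are unit vectors
with `⟪y, x⟫ = q`, and `⟪y, S x⟫ = q ⟪x, S x⟫ ± √(1 - q²) ⟪e, S x⟫`; one of the two signs does not
decrease the modulus, so `q |⟪x, S x⟫| ≤ ω_q(S)`. Polarization bounds `‖S‖` by twice the numerical
radius, whence `q ‖T_i‖ ≤ 2 ω_q(T_i) ≤ 2 Jtω_q(T)`, so `q ‖T‖ ≤ 2 √d Jtω_q(T)`; it remains to
use `2 - q² ≥ 1`. -/

open scoped InnerProductSpace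

variable {H : Type*} [NormedAddCommGroup H] [InnerProductSpace ℂ H]

/-- The joint `q`-numerical radius. -/
noncomputable def Jtw {d : ℕ} (q : ℂ) (T : Fin d → H →L[ℂ] H) : ℝ :=
  sSup {r | ∃ x y : H, ‖x‖ = 1 ∧ ‖y‖ = 1 ∧ ⟪y, x⟫_ℂ = q ∧
    r = Real.sqrt (∑ i, ‖⟪y, (T i) x⟫_ℂ‖ ^ 2)}

/-- The single-operator `q`-numerical radius. -/
noncomputable def wq (q : ℂ) (S : H →L[ℂ] H) : ℝ :=
  sSup {r | ∃ x y : H, ‖x‖ = 1 ∧ ‖y‖ = 1 ∧ ⟪y, x⟫_ℂ = q ∧ r = ‖⟪y, S x⟫_ℂ‖}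

/-- The norm `‖T‖ = sup_{‖x‖=1} (∑ ‖T_i x‖²)^{1/2}` of a tuple of operators. -/
noncomputable def tupNorm {d : ℕ} (T : Fin d → H →L[ℂ] H) : ℝ :=
  sSup {r | ∃ x : H, ‖x‖ = 1 ∧ r = Real.sqrt (∑ i, ‖(T i) x‖ ^ 2)}

theorem norm_le_max_norm_add_norm_sub {E : Type*} [SeminormedAddCommGroup E] [NormedSpace ℝ E]
    (a b : E) : ‖a‖ ≤ max ‖a + b‖ ‖a - b‖ := by
  have h : (2 : ℝ) * ‖a‖ ≤ ‖a + b‖ + ‖a - b‖ := by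
    calc (2 : ℝ) * ‖a‖ = ‖(a + b) + (a - b)‖ := by
          rw [add_add_sub_cancel, ← two_smul ℝ a, norm_smul, Real.norm_two]
      _ ≤ ‖a + b‖ + ‖a - b‖ := norm_add_le _ _
  linarith [le_max_left ‖a + b‖ ‖a - b‖, le_max_right ‖a + b‖ ‖a - b‖]

theorem exists_norm_eq_one_inner_eq_zero_s13 {𝕜 E : Type*} [RCLike 𝕜] [NormedAddCommGroup E]
    [InnerProductSpace 𝕜 E] (hE : 2 ≤ Module.rank 𝕜 E) (u : E) :
    ∃ e : E, ‖e‖ = 1 ∧ ⟪u, e⟫_𝕜 = 0 := by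
  obtain ⟨v, hv, hv0⟩ : ∃ v ∈ (𝕜 ∙ u)ᗮ, v ≠ 0 := by
    by_contra! h
    have htop : 𝕜 ∙ u = ⊤ :=
      Submodule.orthogonal_eq_bot_iff.mp ((Submodule.eq_bot_iff _).2 h)
    have hle : Module.rank 𝕜 E ≤ 1 := rank_le_one_iff.mpr
      ⟨u, fun v => Submodule.mem_span_singleton.mp (htop ▸ Submodule.mem_top)⟩
    exact absurd (hE.trans hle) (by norm_num)
  refine ⟨(‖v‖⁻¹ : 𝕜) • v, norm_smul_inv_norm hv0, ?_⟩
  rw [inner_smul_right, Submodule.mem_orthogonal_singleton_iff_inner_right.mp hv, mul_zero]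

theorem Real.sqrt_sum_sq_le_sqrt_sum_sq {ι : Type*} [Fintype ι] {f g : ι → ℝ}
    (hf : ∀ i, 0 ≤ f i) (hfg : ∀ i, f i ≤ g i) : √(∑ i, f i ^ 2) ≤ √(∑ i, g i ^ 2) :=
  Real.sqrt_le_sqrt (Finset.sum_le_sum fun i _ => pow_le_pow_left₀ (hf i) (hfg i) 2)

theorem Real.le_sqrt_sum_sq {ι : Type*} [Fintype ι] (f : ι → ℝ) (i : ι) :
    f i ≤ √(∑ j, f j ^ 2) :=
  Real.le_sqrt_of_sq_le (Finset.single_le_sum (fun j _ => sq_nonneg (f j)) (Finset.mem_univ i))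

theorem ContinuousLinearMap.norm_inner_self_le_of_norm_eq_one (S : H →L[ℂ] H) {M : ℝ}
    (h : ∀ x, ‖x‖ = 1 → ‖⟪x, S x⟫_ℂ‖ ≤ M) (u : H) : ‖⟪u, S u⟫_ℂ‖ ≤ M * ‖u‖ ^ 2 := by
  rcases eq_or_ne u 0 with rfl | hu
  · simp
  have hz := h ((‖u‖⁻¹ : ℂ) • u) (by simp [norm_smul, hu])
  rw [map_smul, inner_smul_left, inner_smul_right, norm_mul, norm_mul] at hz
  simp only [Complex.norm_conj, norm_inv, Complex.norm_real, norm_norm] at hz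
  have hpos : 0 < ‖u‖ ^ 2 := by positivity
  rw [mul_comm, ← div_le_iff₀' hpos]
  simpa [div_eq_inv_mul, sq, mul_assoc] using hz

theorem ContinuousLinearMap.norm_inner_apply_le_of_norm_inner_self_le (S : H →L[ℂ] H) {M : ℝ}
    (h : ∀ u, ‖⟪u, S u⟫_ℂ‖ ≤ M * ‖u‖ ^ 2) (x y : H) :
    ‖⟪y, S x⟫_ℂ‖ ≤ M * (‖x‖ ^ 2 + ‖y‖ ^ 2) := by
  have h' : ∀ u, ‖⟪(S : H →ₗ[ℂ] H) u, u⟫_ℂ‖ ≤ M * ‖u‖ ^ 2 :=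
    fun u => (norm_inner_symm _ _).trans_le (h u)
  have htri : ∀ a b c d : ℂ, ‖a - b - Complex.I * c + Complex.I * d‖ ≤ ‖a‖ + ‖b‖ + ‖c‖ + ‖d‖ :=
    fun a b c d => by
      simpa [norm_mul, sub_eq_add_neg] using
        (norm_add₄_le : ‖a + -b + -(Complex.I * c) + Complex.I * d‖ ≤ _)
  have hpar := parallelogram_law_with_norm ℂ x y
  have hpar' := parallelogram_law_with_norm ℂ x (Complex.I • y)
  rw [norm_smul, Complex.norm_I, one_mul] at hpar'
  rw [norm_inner_symm, ← S.coe_coe, inner_map_polarization', norm_div, Complex.norm_ofNat,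
    div_le_iff₀ four_pos]
  calc _ ≤ ‖⟪(S : H →ₗ[ℂ] H) (x + y), x + y⟫_ℂ‖ + ‖⟪(S : H →ₗ[ℂ] H) (x - y), x - y⟫_ℂ‖
          + ‖⟪(S : H →ₗ[ℂ] H) (x + Complex.I • y), x + Complex.I • y⟫_ℂ‖
          + ‖⟪(S : H →ₗ[ℂ] H) (x - Complex.I • y), x - Complex.I • y⟫_ℂ‖ := htri _ _ _ _
    _ ≤ M * ‖x + y‖ ^ 2 + M * ‖x - y‖ ^ 2 + M * ‖x + Complex.I • y‖ ^ 2
          + M * ‖x - Complex.I • y‖ ^ 2 := by gcongr <;> exact h' _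
    _ = M * (‖x‖ ^ 2 + ‖y‖ ^ 2) * 4 := by linear_combination M * hpar + M * hpar'

theorem ContinuousLinearMap.opNorm_le_two_mul_of_norm_inner_self_le (S : H →L[ℂ] H) {M : ℝ}
    (hM : 0 ≤ M) (h : ∀ x, ‖x‖ = 1 → ‖⟪x, S x⟫_ℂ‖ ≤ M) : ‖S‖ ≤ 2 * M := by
  refine S.opNorm_le_of_unit_norm (by positivity) fun x hx => ?_
  rcases eq_or_ne (S x) 0 with hSx | hSx
  · rw [hSx, norm_zero]; positivity
  have hy : ‖(‖S x‖⁻¹ : ℂ) • S x‖ = 1 := by simp [norm_smul, hSx]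
  calc ‖S x‖ = ‖⟪(‖S x‖⁻¹ : ℂ) • S x, S x⟫_ℂ‖ := by
        rw [inner_smul_left, norm_mul, inner_self_eq_norm_sq_to_K]
        simp [sq, hSx]
    _ ≤ M * (‖x‖ ^ 2 + ‖(‖S x‖⁻¹ : ℂ) • S x‖ ^ 2) :=
        S.norm_inner_apply_le_of_norm_inner_self_le (S.norm_inner_self_le_of_norm_eq_one h) _ _
    _ = 2 * M := by rw [hx, hy]; ring

theorem norm_inner_le_wq (S : H →L[ℂ] H) {q : ℂ} {x y : H} (hx : ‖x‖ = 1) (hy : ‖y‖ = 1)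
    (hyx : ⟪y, x⟫_ℂ = q) : ‖⟪y, S x⟫_ℂ‖ ≤ wq q S := by
  refine le_csSup ⟨‖S‖, ?_⟩ ⟨x, y, hx, hy, hyx, rfl⟩
  rintro _ ⟨x, y, hx, hy, -, rfl⟩
  calc ‖⟪y, S x⟫_ℂ‖ ≤ ‖y‖ * ‖S x‖ := norm_inner_le_norm y (S x)
    _ ≤ ‖S‖ := by rw [hy, one_mul]; exact S.unit_le_opNorm x hx.le

theorem wq_nonneg (q : ℂ) (S : H →L[ℂ] H) : 0 ≤ wq q S :=
  Real.sSup_nonneg (by rintro _ ⟨x, y, -, -, -, rfl⟩; exact norm_nonneg _)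

theorem sqrt_sum_norm_apply_sq_le {d : ℕ} (T : Fin d → H →L[ℂ] H) {x : H} (hx : ‖x‖ = 1) :
    √(∑ i, ‖T i x‖ ^ 2) ≤ √(∑ i, ‖T i‖ ^ 2) :=
  Real.sqrt_sum_sq_le_sqrt_sum_sq (fun _ => norm_nonneg _)
    fun i => (T i).unit_le_opNorm x hx.le

theorem sqrt_sum_norm_inner_sq_le {d : ℕ} (T : Fin d → H →L[ℂ] H) (x : H) {y : H} (hy : ‖y‖ = 1) :
    √(∑ i, ‖⟪y, T i x⟫_ℂ‖ ^ 2) ≤ √(∑ i, ‖T i x‖ ^ 2) :=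
  Real.sqrt_sum_sq_le_sqrt_sum_sq (fun _ => norm_nonneg _)
    fun i => by simpa [hy] using norm_inner_le_norm y (T i x)

theorem le_Jtw {d : ℕ} (T : Fin d → H →L[ℂ] H) {q : ℂ} {x y : H} (hx : ‖x‖ = 1) (hy : ‖y‖ = 1)
    (hyx : ⟪y, x⟫_ℂ = q) : √(∑ i, ‖⟪y, T i x⟫_ℂ‖ ^ 2) ≤ Jtw q T := by
  refine le_csSup ⟨√(∑ i, ‖T i‖ ^ 2), ?_⟩ ⟨x, y, hx, hy, hyx, rfl⟩
  rintro _ ⟨x, y, hx, hy, -, rfl⟩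
  exact (sqrt_sum_norm_inner_sq_le T x hy).trans (sqrt_sum_norm_apply_sq_le T hx)

theorem le_tupNorm {d : ℕ} (T : Fin d → H →L[ℂ] H) {x : H} (hx : ‖x‖ = 1) :
    √(∑ i, ‖T i x‖ ^ 2) ≤ tupNorm T := by
  refine le_csSup ⟨√(∑ i, ‖T i‖ ^ 2), ?_⟩ ⟨x, hx, rfl⟩
  rintro _ ⟨x, hx, rfl⟩
  exact sqrt_sum_norm_apply_sq_le T hx

theorem Jtw_nonneg {d : ℕ} (q : ℂ) (T : Fin d → H →L[ℂ] H) : 0 ≤ Jtw q T :=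
  Real.sSup_nonneg (by rintro _ ⟨x, y, -, -, -, rfl⟩; exact Real.sqrt_nonneg _)

theorem tupNorm_nonneg {d : ℕ} (T : Fin d → H →L[ℂ] H) : 0 ≤ tupNorm T :=
  Real.sSup_nonneg (by rintro _ ⟨x, -, rfl⟩; exact Real.sqrt_nonneg _)

theorem Jtw_le_tupNorm {d : ℕ} (q : ℂ) (T : Fin d → H →L[ℂ] H) : Jtw q T ≤ tupNorm T :=
  Real.sSup_le (by
    rintro _ ⟨x, y, hx, hy, -, rfl⟩
    exact (sqrt_sum_norm_inner_sq_le T x hy).trans (le_tupNorm T hx)) (tupNorm_nonneg T)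

theorem wq_le_Jtw {d : ℕ} (q : ℂ) (T : Fin d → H →L[ℂ] H) (i : Fin d) : wq q (T i) ≤ Jtw q T :=
  Real.sSup_le (by
    rintro _ ⟨x, y, hx, hy, hyx, rfl⟩
    exact (Real.le_sqrt_sum_sq (fun j => ‖⟪y, T j x⟫_ℂ‖) i).trans (le_Jtw T hx hy hyx))
    (Jtw_nonneg q T)

theorem tupNorm_le_sqrt_mul_of_forall_norm_le {d : ℕ} (T : Fin d → H →L[ℂ] H) {C : ℝ}
    (hC0 : 0 ≤ C) (hC : ∀ i, ‖T i‖ ≤ C) : tupNorm T ≤ √d * C :=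
  Real.sSup_le (by
    rintro _ ⟨x, hx, rfl⟩
    calc √(∑ i, ‖T i x‖ ^ 2) ≤ √(∑ _i : Fin d, C ^ 2) :=
          Real.sqrt_sum_sq_le_sqrt_sum_sq (fun _ => norm_nonneg _)
            fun i => ((T i).unit_le_opNorm x hx.le).trans (hC i)
      _ = √d * C := by simp [Real.sqrt_sq hC0])
    (by positivity)

theorem mul_norm_inner_self_le_wq (hdim : 2 ≤ Module.rank ℂ H) {q : ℝ} (hq0 : 0 ≤ q)
    (hq1 : q ≤ 1) (S : H →L[ℂ] H) {x : H} (hx : ‖x‖ = 1) : q * ‖⟪x, S x⟫_ℂ‖ ≤ wq q S := by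
  obtain ⟨e, he, hxe⟩ := exists_norm_eq_one_inner_eq_zero_s13 hdim x
  have hpair : ∀ σ : ℝ, σ ^ 2 = 1 - q ^ 2 →
      ‖(q : ℂ) * ⟪x, S x⟫_ℂ + σ * ⟪e, S x⟫_ℂ‖ ≤ wq q S := by
    intro σ hσ
    have hy : ‖(q : ℂ) • x + (σ : ℂ) • e‖ = 1 := by
      have := norm_add_sq_eq_norm_sq_add_norm_sq_of_inner_eq_zero ((q : ℂ) • x) ((σ : ℂ) • e)
        (by rw [inner_smul_left, inner_smul_right, hxe, mul_zero, mul_zero])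
      simp only [norm_smul, Complex.norm_real, Real.norm_eq_abs, hx, he, mul_one, ← sq,
        sq_abs] at this
      exact (pow_left_inj₀ (norm_nonneg _) zero_le_one two_ne_zero).mp (by linarith)
    have hyx : ⟪(q : ℂ) • x + (σ : ℂ) • e, x⟫_ℂ = q := by
      rw [inner_add_left, inner_smul_left, inner_smul_left, inner_eq_zero_symm.mp hxe,
        inner_self_eq_norm_sq_to_K, hx]
      simp
    simpa [inner_add_left, inner_smul_left] using norm_inner_le_wq S hx hy hyx
  have hs := Real.sq_sqrt (show 0 ≤ 1 - q ^ 2 by nlinarith)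
  calc q * ‖⟪x, S x⟫_ℂ‖ = ‖(q : ℂ) * ⟪x, S x⟫_ℂ‖ := by
        rw [norm_mul, Complex.norm_real, Real.norm_of_nonneg hq0]
    _ ≤ max ‖(q : ℂ) * ⟪x, S x⟫_ℂ + √(1 - q ^ 2) * ⟪e, S x⟫_ℂ‖
          ‖(q : ℂ) * ⟪x, S x⟫_ℂ - √(1 - q ^ 2) * ⟪e, S x⟫_ℂ‖ := norm_le_max_norm_add_norm_sub _ _
    _ ≤ wq q S := by
        refine max_le (hpair _ hs) ?_
        have := hpair (-√(1 - q ^ 2)) (by rw [neg_sq, hs])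
        rwa [Complex.ofReal_neg, neg_mul, ← sub_eq_add_neg] at this

theorem mul_opNorm_le_two_mul_wq (hdim : 2 ≤ Module.rank ℂ H) {q : ℝ} (hq0 : 0 < q)
    (hq1 : q ≤ 1) (S : H →L[ℂ] H) : q * ‖S‖ ≤ 2 * wq q S := by
  have h := S.opNorm_le_two_mul_of_norm_inner_self_le (div_nonneg (wq_nonneg _ S) hq0.le)
    fun x hx => (le_div_iff₀' hq0).mpr (mul_norm_inner_self_le_wq hdim hq0.le hq1 S hx)
  rw [mul_div_assoc', le_div_iff₀' hq0] at h
  exact h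

theorem stmt_13 {d : ℕ} (hdim : 2 ≤ Module.rank ℂ H) (q : ℝ) (hq : q ∈ Set.Ioo (0:ℝ) 1)
    (T : Fin d → H →L[ℂ] H) :
    q / (2 * Real.sqrt d * (2 - q ^ 2)) * tupNorm T ≤ Jtw (q : ℂ) T ∧
      Jtw (q : ℂ) T ≤ tupNorm T := by
  obtain ⟨hq0, hq1⟩ := hq
  set w := Jtw (q : ℂ) T
  have hw : 0 ≤ w := Jtw_nonneg _ T
  have hT : ∀ i, ‖T i‖ ≤ 2 * w / q := fun i => by
    rw [le_div_iff₀' hq0]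
    linarith [mul_opNorm_le_two_mul_wq hdim hq0 hq1.le (T i), wq_le_Jtw (q : ℂ) T i]
  have h2q : 1 ≤ 2 - q ^ 2 := by nlinarith
  refine ⟨?_, Jtw_le_tupNorm _ T⟩
  calc q / (2 * √d * (2 - q ^ 2)) * tupNorm T
      ≤ q / (2 * √d * (2 - q ^ 2)) * (√d * (2 * w / q)) := by
        gcongr
        exact tupNorm_le_sqrt_mul_of_forall_norm_le T (by positivity) hT
    _ = √d / √d * (w / (2 - q ^ 2)) := by field_simp
    _ ≤ w / (2 - q ^ 2) := mul_le_of_le_one_left (by positivity) (div_self_le_one _)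
    _ ≤ w := div_le_self hw h2q
end
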